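/- Non-freeness of a tuple in a recursively presented group is semi-decidable: let n : ℕ and let R ⊆ FreeGroup (Fin n) satisfy REPred (fun l : List (Fin n × Bool) => FreeGroup.mk l ∈ R), and let k : ℕ. Then the set of k-tuples of words whose images in the presented group ⟨Fin n; R⟩ satisfy some nontrivial relation (i.e., do not freely generate a free subgroup of rank k) is recursively enumerable: REPred (fun v : List.Vector (List (Fin n × Bool)) k => ∃ w : FreeGroup (Fin k), w ≠ 1 ∧ FreeGroup.lift (fun i : Fin k => FreeGroup.mk (v.get i)) w ∈ Subgroup.normalClosure R). -/

import Mathlib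

/-!
A tuple `v` satisfies a nontrivial relation iff there are a word `w ≠ 1` and a list of pairs
`(cᵢ, rᵢ)` with `rᵢ ∈ R ∪ R⁻¹` such that `w(v) = ∏ cᵢ rᵢ cᵢ⁻¹` in the free group. Free reduction
makes the free group a primitive recursive group, so this equation is decidable, while membership
in `R` is semi-decidable; the non-free tuples are therefore a projection of an r.e. set. The one
quantifier that is not existential, "every `rᵢ` lies in `R ∪ R⁻¹`", ranges over a finite list;
since the step-bounded approximations of an r.e. set grow with the bound, a single step bound
serves all `i` at once.
-/

open Encodable Filter Nat.Partrec.Code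

theorem exists_forall_mem_list_iff_of_monotone {ι γ : Type*} [SemilatticeSup γ] [Nonempty γ]
    {P : ι → γ → Prop} (hP : ∀ i, Monotone (P i)) (l : List ι) :
    (∃ m, ∀ i ∈ l, P i m) ↔ ∀ i ∈ l, ∃ m, P i m := by
  refine ⟨fun ⟨m, hm⟩ i hi => ⟨m, hm i hi⟩, fun h => ?_⟩
  have hev : ∀ i ∈ {i | i ∈ l}, ∀ᶠ m in atTop, P i m := fun i hi =>
    let ⟨m, hm⟩ := h i hi
    eventually_atTop.2 ⟨m, fun _ hm' => hP i hm' hm⟩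
  exact ((eventually_all_finite l.finite_toSet).2 hev).exists

section Computability

variable {α β : Type*} [Primcodable α] [Primcodable β]

open Primrec

theorem PrimrecRel.rePred_exists {P : α → β → Prop} (hP : PrimrecRel P) :
    REPred fun a => ∃ b, P a b := by
  classical
  have hf : Primrec₂ fun (a : α) (m : ℕ) =>
      (decode (α := β) m).bind fun b => if P a b then some b else none :=
    option_bind (Primrec.decode.comp snd) <|
      ite (hP.comp (fst.comp fst) snd) (option_some.comp snd) (const none)
  refine (Partrec.rfindOpt hf.to_comp).dom_re.of_eq fun a => ?_
  rw [Nat.rfindOpt_dom]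
  constructor
  · rintro ⟨m, b, hb⟩
    simp only [Option.mem_def, Option.bind_eq_some_iff, Option.ite_none_right_eq_some] at hb
    obtain ⟨b', -, hb', -⟩ := hb
    exact ⟨b', hb'⟩
  · rintro ⟨b, hb⟩
    exact ⟨encode b, b, by simp [hb]⟩

namespace REPred

theorem comp {p : β → Prop} (hp : REPred p) {f : α → β} (hf : Computable f) :
    REPred fun a => p (f a) :=
  Partrec.comp hp hf

theorem exists_monotone_primrecRel {p : α → Prop} (hp : REPred p) :
    ∃ P : α → ℕ → Prop, PrimrecRel P ∧ (∀ a, Monotone (P a)) ∧ ∀ a, p a ↔ ∃ m, P a m := by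
  obtain ⟨c, hc⟩ := exists_code.1 hp
  refine ⟨fun a m => (evaln m c (encode a)).isSome, ?_, fun a => ?_, fun a => ?_⟩
  · exact primrecPred <| (option_isSome.comp <| primrec_evaln.comp <|
      pair (pair snd (const c)) (Primrec.encode.comp fst)).of_eq fun x => by simp
  · intro m m' hm h
    obtain ⟨y, hy⟩ := Option.isSome_iff_exists.1 h
    exact Option.isSome_iff_exists.2 ⟨y, evaln_mono hm hy⟩
  · have : p a ↔ (eval c (encode a)).Dom := by
      simpa [hc] using ⟨fun h => ⟨h, trivial⟩, fun h => h.fst⟩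
    simp only [this, Part.dom_iff_mem, evaln_complete, Option.isSome_iff_exists, Option.mem_def]
    exact exists_comm

theorem or {p q : α → Prop} (hp : REPred p) (hq : REPred q) : REPred fun a => p a ∨ q a := by
  obtain ⟨P, hP, -, hpP⟩ := hp.exists_monotone_primrecRel
  obtain ⟨Q, hQ, -, hqQ⟩ := hq.exists_monotone_primrecRel
  refine (PrimrecRel.rePred_exists (P := fun a m => P a m ∨ Q a m) (hP.or hQ)).of_eq fun a => ?_
  simp [hpP, hqQ, exists_or]

theorem and {p q : α → Prop} (hp : REPred p) (hq : REPred q) : REPred fun a => p a ∧ q a := by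
  obtain ⟨P, hP, -, hpP⟩ := hp.exists_monotone_primrecRel
  obtain ⟨Q, hQ, -, hqQ⟩ := hq.exists_monotone_primrecRel
  refine PrimrecRel.rePred_exists (P := fun a (m : ℕ × ℕ) => P a m.1 ∧ Q a m.2)
    ((hP.comp fst (fst.comp snd)).and (hQ.comp fst (snd.comp snd))) |>.of_eq fun a => ?_
  simp [hpP, hqQ]

theorem exists_snd {q : α → β → Prop} (hq : REPred fun x : α × β => q x.1 x.2) :
    REPred fun a => ∃ b, q a b := by
  obtain ⟨Q, hQ, -, hqQ⟩ := hq.exists_monotone_primrecRel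
  refine PrimrecRel.rePred_exists (P := fun a (x : β × ℕ) => Q (a, x.1) x.2)
    (hQ.comp (pair fst (fst.comp snd)) (snd.comp snd)) |>.of_eq fun a => ?_
  exact ⟨fun ⟨⟨b, m⟩, h⟩ => ⟨b, (hqQ (a, b)).2 ⟨m, h⟩⟩,
    fun ⟨b, hb⟩ => let ⟨m, hm⟩ := (hqQ (a, b)).1 hb; ⟨(b, m), hm⟩⟩

theorem forall_mem_list {q : α → β → Prop} (hq : REPred fun x : α × β => q x.1 x.2) :
    REPred fun x : α × List β => ∀ b ∈ x.2, q x.1 b := by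
  obtain ⟨Q, hQ, hmono, hqQ⟩ := hq.exists_monotone_primrecRel
  have hQ' : PrimrecRel fun (x : α × List β) m => ∀ b ∈ x.2, Q (x.1, b) m :=
    (PrimrecRel.forall_mem_list (R := fun b (y : (α × List β) × ℕ) => Q (y.1.1, b) y.2)
      (hQ.comp (pair (fst.comp (fst.comp snd)) fst) (snd.comp snd))).comp (snd.comp fst) .id
  refine hQ'.rePred_exists.of_eq fun x => ?_
  rw [exists_forall_mem_list_iff_of_monotone (fun b => hmono (x.1, b)) x.2]
  exact forall₂_congr fun b _ => (hqQ (x.1, b)).symm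

end REPred

theorem Primrec.list_prod {M : Type*} [Monoid M] [Primcodable M]
    (hmul : Primrec₂ ((· * ·) : M → M → M)) : Primrec (List.prod : List M → M) :=
  (list_foldr .id (const 1) (hmul.comp (fst.comp snd) (snd.comp snd)).to₂).of_eq
    fun l => l.prod_eq_foldr.symm

end Computability

theorem Submonoid.mem_closure_image_iff_exists_list {M ι : Type*} [Monoid M] {f : ι → M}
    {T : Set ι} {x : M} :
    x ∈ closure (f '' T) ↔ ∃ L : List ι, (∀ i ∈ L, i ∈ T) ∧ (L.map f).prod = x := by
  refine ⟨fun hx => ?_, ?_⟩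
  · induction hx using closure_induction with
    | mem y hy =>
      obtain ⟨i, hi, rfl⟩ := hy
      exact ⟨[i], by simpa using hi, by simp⟩
    | one => exact ⟨[], by simp, rfl⟩
    | mul y z _ _ hy hz =>
      obtain ⟨L, hL, rfl⟩ := hy
      obtain ⟨L', hL', rfl⟩ := hz
      exact ⟨L ++ L', fun i hi => (List.mem_append.1 hi).elim (hL i) (hL' i), by simp⟩
  · rintro ⟨L, hL, rfl⟩
    refine list_prod_mem _ fun y hy => ?_
    obtain ⟨i, hi, rfl⟩ := List.mem_map.1 hy
    exact subset_closure (Set.mem_image_of_mem f (hL i hi))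

section Group

variable {G : Type*} [Group G]

theorem Group.conjugatesOfSet_union_inv (R : Set G) :
    conjugatesOfSet R ∪ (conjugatesOfSet R)⁻¹ =
      (fun t : G × G => t.1 * t.2 * t.1⁻¹) '' {t | t.2 ∈ R ∪ R⁻¹} := by
  ext y
  simp only [Set.mem_union, Set.mem_inv, mem_conjugatesOfSet_iff, isConj_iff, Set.mem_image,
    Set.mem_ofPred_eq, Prod.exists]
  constructor
  · rintro (⟨r, hr, c, rfl⟩ | ⟨r, hr, c, hc⟩)
    · exact ⟨c, r, .inl hr, rfl⟩
    · exact ⟨c, r⁻¹, .inr (by simpa using hr), by rw [← inv_inv y, ← hc]; group⟩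
  · rintro ⟨c, r, hr | hr, rfl⟩
    · exact .inl ⟨r, hr, c, rfl⟩
    · exact .inr ⟨r⁻¹, hr, c, by group⟩

theorem Subgroup.mem_normalClosure_iff_exists_list {R : Set G} {x : G} :
    x ∈ normalClosure R ↔ ∃ L : List (G × G),
      (∀ t ∈ L, t.2 ∈ R ∪ R⁻¹) ∧ (L.map fun t => t.1 * t.2 * t.1⁻¹).prod = x := by
  rw [normalClosure, ← mem_toSubmonoid, closure_toSubmonoid, Group.conjugatesOfSet_union_inv,
    Submonoid.mem_closure_image_iff_exists_list]
  rfl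

theorem Subgroup.rePred_mem_normalClosure [Primcodable G]
    (hmul : Primrec₂ ((· * ·) : G → G → G)) (hinv : Primrec fun g : G => g⁻¹) {R : Set G}
    (hR : REPred (· ∈ R)) : REPred (· ∈ normalClosure R) := by
  classical
  open Primrec in
  have hprod : PrimrecRel fun (x : G) (L : List (G × G)) =>
      (L.map fun t => t.1 * t.2 * t.1⁻¹).prod = x :=
    Primrec.eq.comp ((list_prod hmul).comp (list_map snd
      (hmul.comp (hmul.comp (fst.comp snd) (snd.comp snd)) (hinv.comp (fst.comp snd))).to₂)) fst
  have hrel : REPred fun x : G × List (G × G) => ∀ t ∈ x.2, t.2 ∈ R ∪ R⁻¹ :=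
    REPred.forall_mem_list (q := fun (_ : G) (t : G × G) => t.2 ∈ R ∪ R⁻¹)
      ((hR.or (hR.comp hinv.to_comp)).comp (Computable.snd.comp Computable.snd))
  refine REPred.of_eq ?_ fun x => mem_normalClosure_iff_exists_list.symm
  exact REPred.exists_snd (hrel.and hprod.computablePred.to_re)

end Group

namespace FreeGroup

variable {α σ : Type*} [Primcodable α] [Primcodable σ]

open Primrec

theorem primrec_invRev : Primrec (invRev : List (α × Bool) → List (α × Bool)) :=
  list_reverse.comp <| list_map .id <| pair (fst.comp snd) (Primrec.not.comp (snd.comp snd))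

variable [DecidableEq α]

theorem primrec_reduce : Primrec (reduce : List (α × Bool) → List (α × Bool)) := by
  have hcancel : PrimrecRel fun (x y : α × Bool) => x.1 = y.1 ∧ x.2 = !y.2 :=
    (Primrec.eq.comp (fst.comp fst) (fst.comp snd)).and
      (Primrec.eq.comp (snd.comp fst) (Primrec.not.comp (snd.comp snd)))
  have hstep : Primrec fun x : (List (α × Bool) × (α × Bool) × List (α × Bool) ×
      List (α × Bool)) × (α × Bool) × List (α × Bool) =>
      if x.1.2.1.1 = x.2.1.1 ∧ x.1.2.1.2 = !x.2.1.2 then x.2.2 else x.1.2.1 :: x.2.1 :: x.2.2 :=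
    ite (hcancel.comp (fst.comp (snd.comp fst)) (fst.comp snd)) (snd.comp snd)
      (list_cons.comp (fst.comp (snd.comp fst)) (list_cons.comp (fst.comp snd) (snd.comp snd)))
  exact list_rec .id (const []) <| (list_casesOn (snd.comp (snd.comp snd))
    (list_cons.comp (fst.comp snd) (const [])) hstep.to₂).to₂

def toWordEquiv : FreeGroup α ≃ {L : List (α × Bool) // reduce L = L} where
  toFun x := ⟨x.toWord, reduce_toWord x⟩
  invFun L := mk L.1
  left_inv _ := mk_toWord
  right_inv L := Subtype.ext L.2

instance : Primcodable {L : List (α × Bool) // reduce L = L} :=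
  Primcodable.subtype (Primrec.eq.comp primrec_reduce .id)

instance : Primcodable (FreeGroup α) :=
  Primcodable.ofEquiv _ toWordEquiv

theorem primrec_toWord : Primrec (toWord : FreeGroup α → List (α × Bool)) :=
  subtype_val.comp (of_equiv (e := toWordEquiv))

theorem primrec_mk : Primrec (mk : List (α × Bool) → FreeGroup α) :=
  ((of_equiv_symm (e := toWordEquiv)).comp
    (subtype_mk (h := fun _ => reduce.idem) primrec_reduce)).of_eq
    fun _ => toWordEquiv.symm_apply_eq.2 rfl

theorem primrec_mul : Primrec₂ ((· * ·) : FreeGroup α → FreeGroup α → FreeGroup α) :=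
  (primrec_mk.comp (list_append.comp (primrec_toWord.comp fst)
    (primrec_toWord.comp snd))).of_eq fun _ => by rw [← mul_mk, mk_toWord, mk_toWord]

theorem primrec_inv : Primrec fun x : FreeGroup α => x⁻¹ :=
  (primrec_mk.comp (primrec_invRev.comp primrec_toWord)).of_eq
    fun _ => by rw [← inv_mk, mk_toWord]

theorem primrec_lift {G : Type*} [Group G] [Primcodable G]
    (hmul : Primrec₂ ((· * ·) : G → G → G)) (hinv : Primrec fun g : G => g⁻¹)
    {f : σ → α → G} (hf : Primrec₂ f) : Primrec₂ fun s (x : FreeGroup α) => lift (f s) x := by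
  have hletter : Primrec₂ fun (y : σ × FreeGroup α) (a : α × Bool) =>
      cond a.2 (f y.1 a.1) (f y.1 a.1)⁻¹ :=
    Primrec.cond (snd.comp snd) (hf.comp (fst.comp fst) (fst.comp snd))
      (hinv.comp (hf.comp (fst.comp fst) (fst.comp snd)))
  refine ((list_prod hmul).comp (list_map (primrec_toWord.comp snd) hletter)).of_eq fun y => ?_
  simp only [← lift_mk, mk_toWord]

end FreeGroup

/-- Non-freeness of a tuple in a recursively presented group is semi-decidable:
the set of `k`-tuples of words whose images in `⟨Fin n; R⟩` satisfy some
nontrivial relation is recursively enumerable. -/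
theorem nonfreeness_re (n : ℕ) (R : Set (FreeGroup (Fin n)))
    (hR : REPred (fun l : List (Fin n × Bool) => FreeGroup.mk l ∈ R)) (k : ℕ) :
    REPred (fun v : List.Vector (List (Fin n × Bool)) k =>
      ∃ w : FreeGroup (Fin k), w ≠ 1 ∧
        FreeGroup.lift (fun i : Fin k => FreeGroup.mk (v.get i)) w ∈
          Subgroup.normalClosure R) := by
  have hR' : REPred (· ∈ R) :=
    (hR.comp FreeGroup.primrec_toWord.to_comp).of_eq fun _ => by rw [FreeGroup.mk_toWord]
  have hN := Subgroup.rePred_mem_normalClosure FreeGroup.primrec_mul FreeGroup.primrec_inv hR'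
  have hsubst : Primrec₂ fun (v : List.Vector (List (Fin n × Bool)) k) (w : FreeGroup (Fin k)) =>
      FreeGroup.lift (fun i => FreeGroup.mk (v.get i)) w :=
    FreeGroup.primrec_lift FreeGroup.primrec_mul FreeGroup.primrec_inv
      (FreeGroup.primrec_mk.comp (Primrec.vector_get.comp Primrec.fst Primrec.snd))
  have hne : PrimrecPred fun x : List.Vector (List (Fin n × Bool)) k × FreeGroup (Fin k) =>
      x.2 ≠ 1 :=
    (Primrec.eq.comp Primrec.snd (Primrec.const 1)).not
  exact REPred.exists_snd (hne.computablePred.to_re.and (hN.comp hsubst.to_comp))
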